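/- arXiv:1904.05906 — 4 statements merged into one kernel-verified Lean document; each statement's English description precedes it below -/
import Mathlib

section
/- Let F be a field, let N, M, ρ be positive integers with 2 ≤ ρ ≤ N, let β_1, …, β_N be pairwise distinct elements of F, and for each m ∈ [M] let R_m ⊆ [N] be a subset of cardinality exactly ρ. Define the N × M matrix V over F by V[n, m] = (∏_{n' ∈ R_m, n' ≠ n} (β_n − β_{n'}))^{−1} if n ∈ R_m, and V[n, m] = 0 otherwise. Then the rank of V is at most N − ρ + 1. -/
open Polynomial Finset

/-- Key Lagrange identity: for `j` strictly below `#s - 1`, the weighted power sum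
with dual-GRS coefficients vanishes. -/
lemma dualGRS_sum_eq_zero {F : Type*} [Field F] {ι : Type*} [DecidableEq ι]
    (s : Finset ι) (v : ι → F) (hv : Set.InjOn v s) (j : ℕ) (hj : j + 1 < s.card) :
    ∑ i ∈ s, v i ^ j * (∏ k ∈ s.erase i, (v i - v k))⁻¹ = 0 := by
  have hdeg : ((X : F[X]) ^ j).degree < (s.card : WithBot ℕ) := by
    rw [degree_X_pow]
    exact_mod_cast Nat.lt_of_succ_lt hj
  have h := Lagrange.eq_interpolate hv hdeg
  have hc := congrArg (fun p : F[X] => p.coeff (s.card - 1)) h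
  simp only [Lagrange.interpolate_apply] at hc
  rw [coeff_X_pow, if_neg (by omega), finset_sum_coeff] at hc
  have hbasis : ∀ i ∈ s, (C (eval (v i) ((X : F[X]) ^ j)) * Lagrange.basis s v i).coeff
      (s.card - 1) = v i ^ j * (∏ k ∈ s.erase i, (v i - v k))⁻¹ := by
    intro i hi
    have hb : Lagrange.basis s v i
        = C (Lagrange.nodalWeight s v i) * Lagrange.nodal (s.erase i) v := by
      rw [Lagrange.basis_eq_prod_sub_inv_mul_nodal_div hi,
        ← Lagrange.nodal_erase_eq_nodal_div hi]
    have hmonic : (Lagrange.nodal (s.erase i) v).Monic := Lagrange.nodal_monic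
    have hnd : (Lagrange.nodal (s.erase i) v).natDegree = s.card - 1 := by
      rw [Lagrange.natDegree_nodal, card_erase_of_mem hi]
    have hcoeff : (Lagrange.nodal (s.erase i) v).coeff (s.card - 1) = 1 := by
      rw [← hnd]; exact hmonic.coeff_natDegree
    rw [hb, ← mul_assoc, ← C_mul, coeff_C_mul, hcoeff, mul_one, eval_pow, eval_X,
      Lagrange.nodalWeight, ← prod_inv_distrib]
  rw [Finset.sum_congr rfl hbasis] at hc
  exact hc.symm

/-- The interference matrix V whose column m is supported on the ρ-element set R m,
with nonzero entries the dual-GRS coefficients, has rank at most N − ρ + 1. -/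
theorem interference_matrix_rank_le {F : Type*} [Field F] (N M ρ : ℕ)
    (hρ2 : 2 ≤ ρ) (hρN : ρ ≤ N) (hM : 0 < M)
    (β : Fin N → F) (hβ : Function.Injective β)
    (R : Fin M → Finset (Fin N)) (hR : ∀ m, (R m).card = ρ)
    (V : Matrix (Fin N) (Fin M) F)
    (hV : ∀ n m, V n m =
      if n ∈ R m then (∏ n' ∈ (R m).erase n, (β n - β n'))⁻¹ else 0) :
    V.rank ≤ N - ρ + 1 := by
  classical
  -- The Vandermonde-type matrix W with rows (β_n ^ j), j = 0, ..., ρ - 2.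
  set W : Matrix (Fin (ρ - 1)) (Fin N) F := Matrix.of fun j n => β n ^ (j : ℕ) with hW
  -- W * V = 0
  have hWV : W * V = 0 := by
    ext j m
    have key := dualGRS_sum_eq_zero (R m) β (Function.Injective.injOn hβ) (j : ℕ)
      (by rw [hR m]; omega)
    simp only [Matrix.mul_apply, Matrix.zero_apply]
    calc ∑ n, W j n * V n m
        = ∑ n ∈ R m, β n ^ (j : ℕ) * (∏ n' ∈ (R m).erase n, (β n - β n'))⁻¹ := by
          rw [← Finset.sum_subset (Finset.subset_univ (R m))]
          · exact Finset.sum_congr rfl fun n hn => by rw [hW, hV, if_pos hn]; rfl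
          · intro n _ hn
            rw [hV, if_neg hn, mul_zero]
      _ = 0 := key
  -- range of V.mulVecLin is contained in the kernel of W.mulVecLin
  have hle : LinearMap.range V.mulVecLin ≤ LinearMap.ker W.mulVecLin := by
    rintro x ⟨y, rfl⟩
    simp only [LinearMap.mem_ker, Matrix.mulVecLin_apply, Matrix.mulVec_mulVec, hWV]
    simp
  -- rank W = ρ - 1
  have hrankW_le : W.rank ≤ ρ - 1 := Matrix.rank_le_card_height W |>.trans (by simp)
  have hrankW_ge : ρ - 1 ≤ W.rank := by
    -- consider the square submatrix on the first ρ-1 columns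
    set e : Fin (ρ - 1) → Fin N := Fin.castLE (by omega) with he
    set E : Matrix (Fin N) (Fin (ρ - 1)) F := Matrix.of fun n i => if e i = n then 1 else 0
    have hsub : W * E = W.submatrix id e := by
      ext j i
      simp only [Matrix.mul_apply, Matrix.submatrix_apply, id_eq, E, Matrix.of_apply, mul_ite,
        mul_one, mul_zero]
      simp [Finset.sum_ite_eq]
    have hinj : Function.Injective (β ∘ e) := by
      intro a b hab
      exact (Fin.castLE_injective _) (hβ hab)
    have hdet : (W.submatrix id e).det ≠ 0 := by
      have : W.submatrix id e = (Matrix.vandermonde (β ∘ e)).transpose := by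
        ext j i
        simp [Matrix.vandermonde, W, e]
      rw [this, Matrix.det_transpose, Matrix.det_vandermonde]
      refine Finset.prod_ne_zero_iff.mpr fun i _ => Finset.prod_ne_zero_iff.mpr fun k hk => ?_
      exact sub_ne_zero_of_ne fun h => (Finset.mem_Ioi.mp hk).ne' (hinj h)
    have hrank_sub : (W.submatrix id e).rank = ρ - 1 := by
      rw [Matrix.rank_of_isUnit _ ((Matrix.isUnit_iff_isUnit_det _).mpr
        (isUnit_iff_ne_zero.mpr hdet))]
      simp
    calc ρ - 1 = (W.submatrix id e).rank := hrank_sub.symm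
      _ = (W * E).rank := by rw [hsub]
      _ ≤ W.rank := Matrix.rank_mul_le_left W E
  have hrankW : W.rank = ρ - 1 := le_antisymm hrankW_le hrankW_ge
  -- rank-nullity for W
  have hrn := LinearMap.finrank_range_add_finrank_ker W.mulVecLin
  rw [show Module.finrank F (Fin N → F) = N by simp] at hrn
  have hker : Module.finrank F (LinearMap.ker W.mulVecLin) = N - (ρ - 1) := by
    have : W.rank = Module.finrank F (LinearMap.range W.mulVecLin) := rfl
    omega
  have hfinal : V.rank ≤ Module.finrank F (LinearMap.ker W.mulVecLin) :=
    Submodule.finrank_mono hle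
  omega
end

section
/- Let F be a field, let L, ρ be positive integers with L ≤ ρ, let β_1, …, β_ρ be pairwise distinct nonzero elements of F, and let γ_1, …, γ_L be pairwise distinct elements of F such that γ_ℓ + β_n ≠ 0 for all ℓ ∈ [L], n ∈ [ρ]. Define v_n = (∏_{n' ∈ [ρ], n' ≠ n} (β_n − β_{n'}))^{−1}. Let A be the L × ρ matrix with A[i, n] = β_n^{i−1} (i ∈ [L], n ∈ [ρ]) and let B be the ρ × L matrix with B[n, ℓ] = v_n / (γ_ℓ + β_n). Then the L × L matrix A · B is invertible. -/
open Polynomial Finset in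
/-- Lagrange partial-fraction identity: for `i < ρ` and `t` distinct from all nodes,
`∑ n, vₙ βₙ^i / (t - βₙ) = t^i / ∏ n (t - βₙ)`. -/
lemma lagrange_pf_key {F : Type*} [Field F] {ρ : ℕ} (β : Fin ρ → F)
    (hβ : Function.Injective β) (i : ℕ) (hi : i < ρ) (t : F) (ht : ∀ n, t - β n ≠ 0) :
    ∑ n, (∏ n' ∈ Finset.univ.erase n, (β n - β n'))⁻¹ * β n ^ i / (t - β n)
      = t ^ i / ∏ n, (t - β n) := by
  have hdeg : (X ^ i : F[X]).degree < (Finset.univ : Finset (Fin ρ)).card := by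
    simpa [Polynomial.degree_X_pow] using (Nat.cast_lt.mpr hi : (i : WithBot ℕ) < ρ)
  have h := Lagrange.eq_interpolate (s := Finset.univ) (v := β) hβ.injOn hdeg
  have h2 := congrArg (Polynomial.eval t) h
  rw [Lagrange.interpolate_apply, Polynomial.eval_finset_sum] at h2
  simp only [Polynomial.eval_pow, Polynomial.eval_X, Polynomial.eval_mul, Polynomial.eval_C] at h2
  have hbasis : ∀ n : Fin ρ, Polynomial.eval t (Lagrange.basis Finset.univ β n)
      = (∏ n' ∈ Finset.univ.erase n, (β n - β n'))⁻¹ * ((∏ n', (t - β n')) / (t - β n)) := by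
    intro n
    rw [Lagrange.basis, Polynomial.eval_prod]
    have : ∀ j ∈ Finset.univ.erase n, Polynomial.eval t (Lagrange.basisDivisor (β n) (β j))
        = (β n - β j)⁻¹ * (t - β j) := by
      intro j _
      simp [Lagrange.basisDivisor]
    have e1 : ∏ j ∈ Finset.univ.erase n, Polynomial.eval t (Lagrange.basisDivisor (β n) (β j))
        = ∏ j ∈ Finset.univ.erase n, ((β n - β j)⁻¹ * (t - β j)) := Finset.prod_congr rfl this
    rw [e1, Finset.prod_mul_distrib, Finset.prod_inv_distrib]
    congr 1
    rw [eq_div_iff (ht n), mul_comm]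
    exact Finset.mul_prod_erase Finset.univ (fun j => t - β j) (Finset.mem_univ n)
  rw [Finset.sum_congr rfl (fun n _ => by rw [hbasis n])] at h2
  have hP : (∏ n', (t - β n')) ≠ 0 := Finset.prod_ne_zero_iff.mpr fun n _ => ht n
  rw [eq_div_iff hP, h2, Finset.sum_mul]
  apply Finset.sum_congr rfl
  intro n _
  ring

/-- Decodability: with A the L × ρ Vandermonde matrix in the β's and B the ρ × L
Cauchy-type matrix with row weights vₙ = (∏_{n' ≠ n}(βₙ − β_{n'}))⁻¹, the L × L
matrix A·B is invertible. -/
theorem vandermonde_cauchy_product_invertible {F : Type*} [Field F]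
    (L ρ : ℕ) (hL : 0 < L) (hLρ : L ≤ ρ)
    (β : Fin ρ → F) (hβ : Function.Injective β) (hβ0 : ∀ n, β n ≠ 0)
    (γ : Fin L → F) (hγ : Function.Injective γ)
    (hγβ : ∀ ℓ n, γ ℓ + β n ≠ 0)
    (v : Fin ρ → F) (hv : ∀ n, v n = (∏ n' ∈ Finset.univ.erase n, (β n - β n'))⁻¹)
    (A : Matrix (Fin L) (Fin ρ) F) (hA : ∀ i n, A i n = β n ^ (i : ℕ))
    (B : Matrix (Fin ρ) (Fin L) F) (hB : ∀ n ℓ, B n ℓ = v n / (γ ℓ + β n)) :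
    IsUnit (A * B) := by
  set d : Fin L → F := fun ℓ => -(∏ n, (-γ ℓ - β n))⁻¹ with hd
  have hd0 : ∀ ℓ, d ℓ ≠ 0 := by
    intro ℓ
    simp only [hd, neg_ne_zero, ne_eq, inv_eq_zero]
    exact Finset.prod_ne_zero_iff.mpr fun n _ => by
      have := hγβ ℓ n; intro h; apply this; linear_combination -h
  have hAB : A * B = Matrix.transpose (Matrix.vandermonde (fun ℓ => -γ ℓ)) * Matrix.diagonal d := by
    ext i ℓ
    rw [Matrix.mul_diagonal, Matrix.transpose_apply, Matrix.vandermonde_apply]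
    rw [Matrix.mul_apply]
    have ht : ∀ n, -γ ℓ - β n ≠ 0 := by
      intro n h; exact hγβ ℓ n (by linear_combination -h)
    have key := lagrange_pf_key β hβ i (lt_of_lt_of_le i.isLt hLρ) (-γ ℓ) ht
    have : ∀ n, A i n * B n ℓ
        = -((∏ n' ∈ Finset.univ.erase n, (β n - β n'))⁻¹ * β n ^ (i:ℕ) / (-γ ℓ - β n)) := by
      intro n
      rw [hA, hB, hv]
      have h1 : -γ ℓ - β n = -(γ ℓ + β n) := by ring
      rw [h1, div_neg, neg_neg]
      ring
    rw [Finset.sum_congr rfl (fun n _ => this n), Finset.sum_neg_distrib, key]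
    simp only [hd]
    ring
  rw [hAB, Matrix.isUnit_iff_isUnit_det, Matrix.det_mul, Matrix.det_transpose,
    Matrix.det_diagonal, isUnit_iff_ne_zero]
  apply mul_ne_zero
  · rw [Matrix.det_vandermonde_ne_zero_iff]
    intro a b h
    exact hγ (neg_injective h)
  · exact Finset.prod_ne_zero_iff.mpr fun ℓ _ => hd0 ℓ
end

section
/- Let N, ρ, s, b, M' be positive integers with 1 ≤ s ≤ ρ, and let R_1, …, R_{M'} be subsets of [N], each of cardinality exactly ρ, such that every element n ∈ [N] belongs to exactly b of the sets R_1, …, R_{M'}. Let D : [N] → ℝ be a function such that for every m ∈ [M'] and every subset R' ⊆ R_m with |R'| = s it holds that ∑_{n ∈ R'} D(n) ≥ 1. Then ∑_{n ∈ [N]} D(n) ≥ N / s. -/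
open Finset

/-- Number of `s`-subsets of `S` containing a fixed element `x ∈ S`. -/
lemma count_subsets_mem {α : Type*} [DecidableEq α] (S : Finset α) (x : α) (hx : x ∈ S)
    (s : ℕ) (hs : 1 ≤ s) :
    ((S.powersetCard s).filter (fun A => x ∈ A)).card = (S.card - 1).choose (s - 1) := by
  rw [← Finset.card_erase_of_mem hx, ← Finset.card_powersetCard (s - 1) (S.erase x)]
  apply Finset.card_bij (fun A _ => A.erase x)
  · intro A hA
    simp only [mem_filter, mem_powersetCard] at hA
    rw [mem_powersetCard]
    exact ⟨Finset.erase_subset_erase x hA.1.1,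
      by rw [Finset.card_erase_of_mem hA.2, hA.1.2]⟩
  · intro A hA B hB h
    simp only [mem_filter] at hA hB
    rw [← Finset.insert_erase hA.2, ← Finset.insert_erase hB.2, h]
  · intro B hB
    rw [mem_powersetCard] at hB
    have hxB : x ∉ B := fun h => (Finset.mem_erase.1 (hB.1 h)).1 rfl
    refine ⟨insert x B, ?_, Finset.erase_insert hxB⟩
    simp only [mem_filter, mem_powersetCard]
    refine ⟨⟨Finset.insert_subset hx (hB.1.trans (Finset.erase_subset x S)), ?_⟩,
      Finset.mem_insert_self x B⟩
    rw [Finset.card_insert_of_notMem hxB, hB.2]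
    omega

/-- Averaging over s-subsets: if each s-subset of `S` has `f`-sum ≥ 1 and `|S| = ρ`,
then the sum over `S` is at least `ρ / s`. -/
lemma sum_ge_of_subsets {α : Type*} [DecidableEq α] (S : Finset α) (ρ s : ℕ)
    (hρ : 0 < ρ) (hs1 : 1 ≤ s) (hsρ : s ≤ ρ) (hS : S.card = ρ) (f : α → ℝ)
    (h : ∀ A ⊆ S, A.card = s → 1 ≤ ∑ n ∈ A, f n) :
    (ρ : ℝ) / s ≤ ∑ n ∈ S, f n := by
  have key : ∑ A ∈ S.powersetCard s, ∑ n ∈ A, f n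
      = ((ρ - 1).choose (s - 1) : ℝ) * ∑ n ∈ S, f n := by
    have h1 : ∀ A ∈ S.powersetCard s, ∑ n ∈ A, f n
        = ∑ n ∈ S, if n ∈ A then f n else 0 := by
      intro A hA
      rw [mem_powersetCard] at hA
      rw [Finset.sum_ite_mem, Finset.inter_comm, Finset.inter_eq_left.2 hA.1]
    rw [Finset.sum_congr rfl h1, Finset.sum_comm, Finset.mul_sum]
    refine Finset.sum_congr rfl fun n hn => ?_
    rw [← Finset.sum_filter, Finset.sum_const, count_subsets_mem S n hn s hs1, hS,
      nsmul_eq_mul, mul_comm]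
  have hlow : (ρ.choose s : ℝ) ≤ ∑ A ∈ S.powersetCard s, ∑ n ∈ A, f n := by
    have := Finset.card_nsmul_le_sum (S.powersetCard s) (fun A => ∑ n ∈ A, f n) 1
      (fun A hA => by
        rw [mem_powersetCard] at hA
        exact h A hA.1 hA.2)
    rw [Finset.card_powersetCard, hS] at this
    simpa using this
  rw [key] at hlow
  have hid : s * ρ.choose s = ρ * (ρ - 1).choose (s - 1) := by
    have h3 := Nat.add_one_mul_choose_eq (ρ - 1) (s - 1)
    have h1 : ρ - 1 + 1 = ρ := by omega
    have h2 : s - 1 + 1 = s := by omega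
    simp only [Nat.succ_eq_add_one, h1, h2] at h3
    rw [mul_comm]
    exact h3.symm
  have hcpos : (0 : ℝ) < ((ρ - 1).choose (s - 1) : ℝ) := by
    exact_mod_cast Nat.choose_pos (by omega : s - 1 ≤ ρ - 1)
  have hspos : (0 : ℝ) < s := by exact_mod_cast hs1
  have hcast : (s : ℝ) * ρ.choose s = (ρ : ℝ) * (ρ - 1).choose (s - 1) := by
    exact_mod_cast congrArg (Nat.cast : ℕ → ℝ) hid
  rw [div_le_iff₀ hspos]
  nlinarith [mul_le_mul_of_nonneg_left hlow hspos.le, hcpos, hspos]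

/-- Exact b-cover converse: if the ρ-element sets R₁,…,R_{M'} cover each element of
[N] exactly b times, and every s-element subset of each Rₘ has D-sum at least 1,
then ∑_{n ∈ [N]} D(n) ≥ N/s. -/
theorem exact_cover_download_bound (N ρ s b M' : ℕ)
    (hN : 0 < N) (hρ : 0 < ρ) (hb : 0 < b) (hM' : 0 < M')
    (hs1 : 1 ≤ s) (hsρ : s ≤ ρ)
    (R : Fin M' → Finset (Fin N)) (hcard : ∀ m, (R m).card = ρ)
    (hcover : ∀ n : Fin N, (Finset.univ.filter (fun m => n ∈ R m)).card = b)
    (D : Fin N → ℝ)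
    (hD : ∀ m : Fin M', ∀ R' ⊆ R m, R'.card = s → 1 ≤ ∑ n ∈ R', D n) :
    (N : ℝ) / (s : ℝ) ≤ ∑ n, D n := by
  have hper : ∀ m : Fin M', (ρ : ℝ) / s ≤ ∑ n ∈ R m, D n := fun m =>
    sum_ge_of_subsets (R m) ρ s hρ hs1 hsρ (hcard m) D (hD m)
  -- double counting: ∑_m ∑_{n ∈ R m} D n = b * ∑ D
  have hswap : ∑ m : Fin M', ∑ n ∈ R m, D n = (b : ℝ) * ∑ n, D n := by
    have h1 : ∀ m : Fin M', ∑ n ∈ R m, D n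
        = ∑ n : Fin N, if n ∈ R m then D n else 0 := by
      intro m
      rw [Finset.sum_ite_mem, Finset.univ_inter]
    rw [Finset.sum_congr rfl (fun m _ => h1 m), Finset.sum_comm, Finset.mul_sum]
    refine Finset.sum_congr rfl fun n _ => ?_
    rw [← Finset.sum_filter, Finset.sum_const, hcover n, nsmul_eq_mul, mul_comm]
  -- counting: M' * ρ = b * N
  have hcount : M' * ρ = b * N := by
    have h1 : ∑ m : Fin M', (R m).card = ∑ n : Fin N,
        (Finset.univ.filter (fun m => n ∈ R m)).card := by
      simp_rw [Finset.card_filter, Finset.card_eq_sum_ones]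
      rw [Finset.sum_comm]
      refine Finset.sum_congr rfl fun m _ => ?_
      rw [Finset.sum_ite_mem, Finset.univ_inter]
    rw [Finset.sum_congr rfl (fun m _ => hcard m),
      Finset.sum_congr rfl (fun n _ => hcover n), Finset.sum_const, Finset.sum_const,
      Finset.card_univ, Finset.card_univ, Fintype.card_fin, Fintype.card_fin,
      smul_eq_mul, smul_eq_mul] at h1
    exact h1.trans (Nat.mul_comm N b)
  have hlow : (M' : ℝ) * ((ρ : ℝ) / s) ≤ (b : ℝ) * ∑ n, D n := by
    rw [← hswap]
    calc (M' : ℝ) * ((ρ : ℝ) / s) = ∑ _m : Fin M', (ρ : ℝ) / s := by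
          rw [Finset.sum_const, Finset.card_univ, Fintype.card_fin, nsmul_eq_mul]
      _ ≤ _ := Finset.sum_le_sum fun m _ => hper m
  have hbpos : (0 : ℝ) < b := by exact_mod_cast hb
  have hspos : (0 : ℝ) < s := by exact_mod_cast hs1
  have hcast : (M' : ℝ) * ρ = (b : ℝ) * N := by exact_mod_cast hcount
  rw [div_le_iff₀ hspos]
  have h2 := mul_le_mul_of_nonneg_right hlow hspos.le
  rw [mul_assoc, div_mul_cancel₀ _ hspos.ne'] at h2
  nlinarith [h2, hbpos]
end

section
/- Let F be a field, let L, ρ be positive integers with L ≤ ρ, let β_1, …, β_ρ be pairwise distinct nonzero elements of F, and let γ_1, …, γ_L be pairwise distinct elements of F such that γ_ℓ + β_n ≠ 0 for all ℓ ∈ [L], n ∈ [ρ]. Define v_n = (∏_{n' ∈ [ρ], n' ≠ n} (β_n − β_{n'}))^{−1}. Then the ρ × ρ matrix [B | C], whose first L columns are given by B[n, ℓ] = v_n / (γ_ℓ + β_n) (ℓ ∈ [L]) and whose last ρ − L columns are given by C[n, j] = v_n β_n^{j−1} (j ∈ [ρ − L]), is invertible. -/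
open Polynomial

/-- The ρ × ρ Cauchy–Vandermonde matrix [B | C] with B[n,ℓ] = vₙ/(γ_ℓ + βₙ) and
C[n,j] = vₙ βₙ^{j−1} is invertible. -/
theorem cauchy_vandermonde_invertible {F : Type*} [Field F]
    (L ρ : ℕ) (hL : 0 < L) (hLρ : L ≤ ρ)
    (β : Fin ρ → F) (hβ : Function.Injective β) (hβ0 : ∀ n, β n ≠ 0)
    (γ : Fin L → F) (hγ : Function.Injective γ)
    (hγβ : ∀ ℓ n, γ ℓ + β n ≠ 0)
    (v : Fin ρ → F) (hv : ∀ n, v n = (∏ n' ∈ Finset.univ.erase n, (β n - β n'))⁻¹) :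
    IsUnit (Matrix.of (fun (n : Fin ρ) (j : Fin ρ) =>
      if h : (j : ℕ) < L then v n / (γ ⟨(j : ℕ), h⟩ + β n)
      else v n * β n ^ ((j : ℕ) - L))) := by
  classical
  set M : Matrix (Fin ρ) (Fin ρ) F := Matrix.of (fun (n : Fin ρ) (j : Fin ρ) =>
      if h : (j : ℕ) < L then v n / (γ ⟨(j : ℕ), h⟩ + β n)
      else v n * β n ^ ((j : ℕ) - L)) with hM
  have hvne : ∀ n, v n ≠ 0 := by
    intro n
    rw [hv]
    refine inv_ne_zero (Finset.prod_ne_zero_iff.mpr fun n' hn' => ?_)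
    exact sub_ne_zero_of_ne fun h => (Finset.mem_erase.mp hn').1 (hβ h).symm
  rw [Matrix.isUnit_iff_isUnit_det, isUnit_iff_ne_zero]
  intro hdet
  obtain ⟨c, hc0, hMc⟩ := Matrix.exists_mulVec_eq_zero_iff.mpr hdet
  -- polynomial setup
  set D : F[X] := ∏ ℓ : Fin L, (X + C (γ ℓ)) with hD
  set Q : Fin ρ → F[X] := fun j =>
    if h : (j : ℕ) < L then
      C (c j) * ∏ ℓ' ∈ Finset.univ.erase ⟨(j : ℕ), h⟩, (X + C (γ ℓ'))
    else C (c j) * X ^ ((j : ℕ) - L) * D with hQ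
  set P : F[X] := ∑ j, Q j with hP
  have hDeval : ∀ x : F, D.eval x = ∏ ℓ : Fin L, (x + γ ℓ) := by
    intro x; simp [hD, eval_prod]
  have hDne : D ≠ 0 := by
    refine Monic.ne_zero (monic_prod_of_monic _ _ fun ℓ _ => monic_X_add_C _)
  -- evaluation at β n
  have hSn : ∀ n, ∑ j, M n j * c j = 0 := fun n => congrFun hMc n
  have hPeval : ∀ n, P.eval (β n) = 0 := by
    intro n
    have key : ∀ j, (Q j).eval (β n)
        = (∏ ℓ : Fin L, (β n + γ ℓ)) * ((v n)⁻¹ * (M n j * c j)) := by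
      intro j
      by_cases h : (j : ℕ) < L
      · have hprod : (∏ ℓ' ∈ Finset.univ.erase ⟨(j : ℕ), h⟩, (β n + γ ℓ'))
            * (β n + γ ⟨(j : ℕ), h⟩) = ∏ ℓ : Fin L, (β n + γ ℓ) :=
          Finset.prod_erase_mul _ _ (Finset.mem_univ _)
        have hne : γ ⟨(j : ℕ), h⟩ + β n ≠ 0 := hγβ _ n
        simp only [hQ, h, dif_pos, eval_mul, eval_C, eval_prod, eval_add, eval_X,
          hM, Matrix.of_apply]
        rw [← hprod]
        field_simp [hvne n, hne]
        ring
      · simp only [hQ, h, dif_neg, not_false_iff, eval_mul, eval_C, eval_pow, eval_X,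
          hM, Matrix.of_apply, hDeval]
        field_simp [hvne n]
    calc P.eval (β n) = ∑ j, (Q j).eval (β n) := by simp [hP, eval_finset_sum]
      _ = (∏ ℓ : Fin L, (β n + γ ℓ)) * ((v n)⁻¹ * ∑ j, M n j * c j) := by
          simp only [key]; rw [← Finset.mul_sum, ← Finset.mul_sum]
      _ = 0 := by rw [hSn n]; ring
  -- degree bound
  have hdeg : P.natDegree < ρ := by
    have h1 : ∀ j : Fin ρ, (Q j).natDegree ≤ ρ - 1 := by
      intro j
      by_cases h : (j : ℕ) < L
      · simp only [hQ, h, dif_pos]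
        refine (natDegree_C_mul_le _ _).trans ((natDegree_prod_le _ _).trans ?_)
        have hb := Finset.sum_le_card_nsmul (Finset.univ.erase (⟨(j : ℕ), h⟩ : Fin L))
          (fun ℓ' => (X + C (γ ℓ')).natDegree) 1
          (fun ℓ' _ => (natDegree_X_add_C (γ ℓ')).le)
        simp only [Finset.card_erase_of_mem (Finset.mem_univ _), Finset.card_univ,
          Fintype.card_fin, smul_eq_mul, mul_one] at hb
        omega
      · simp only [hQ, h, dif_neg, not_false_iff]
        refine (natDegree_mul_le).trans ?_
        have h2 : (C (c j) * X ^ ((j : ℕ) - L)).natDegree ≤ (j : ℕ) - L :=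
          (natDegree_C_mul_le _ _).trans (natDegree_X_pow _).le
        have h3 : D.natDegree ≤ L := by
          refine (natDegree_prod_le _ _).trans ?_
          have hb := Finset.sum_le_card_nsmul (Finset.univ : Finset (Fin L))
            (fun ℓ => (X + C (γ ℓ)).natDegree) 1
            (fun ℓ _ => (natDegree_X_add_C (γ ℓ)).le)
          simpa using hb
        have := j.2
        omega
    have := Polynomial.natDegree_sum_le_of_forall_le Finset.univ Q fun j _ => h1 j
    rw [← hP] at this
    omega
  have hPzero : P = 0 := by
    refine Polynomial.eq_zero_of_natDegree_lt_card_of_eval_eq_zero P hβ hPeval ?_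
    simpa using hdeg
  -- evaluate at -γ ℓ₀ to kill Cauchy coefficients
  have hcL : ∀ (j : Fin ρ) (h : (j : ℕ) < L), c j = 0 := by
    intro j0 h0
    set ℓ0 : Fin L := ⟨(j0 : ℕ), h0⟩ with hℓ0
    have heval0 : P.eval (-γ ℓ0) = 0 := by rw [hPzero]; simp
    have hsum : P.eval (-γ ℓ0)
        = c j0 * ∏ ℓ' ∈ Finset.univ.erase ℓ0, (-γ ℓ0 + γ ℓ') := by
      rw [hP, eval_finset_sum]
      rw [Finset.sum_eq_single j0]
      · simp only [hQ, h0, dif_pos, eval_mul, eval_C, eval_prod, eval_add, eval_X, ← hℓ0]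
      · intro j _ hj
        by_cases h : (j : ℕ) < L
        · simp only [hQ, h, dif_pos, eval_mul, eval_C, eval_prod, eval_add, eval_X]
          have hmem : ℓ0 ∈ Finset.univ.erase (⟨(j : ℕ), h⟩ : Fin L) := by
            refine Finset.mem_erase.mpr ⟨?_, Finset.mem_univ _⟩
            intro hcon
            exact hj (Fin.ext (by simpa [hℓ0, Fin.ext_iff] using hcon.symm))
          rw [Finset.prod_eq_zero hmem (by ring)]
          ring
        · simp only [hQ, h, dif_neg, not_false_iff, eval_mul, hDeval]
          rw [Finset.prod_eq_zero (Finset.mem_univ ℓ0) (by ring)]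
          ring
      · intro hj; exact absurd (Finset.mem_univ j0) hj
    have hprodne : (∏ ℓ' ∈ Finset.univ.erase ℓ0, (-γ ℓ0 + γ ℓ')) ≠ 0 := by
      refine Finset.prod_ne_zero_iff.mpr fun ℓ' hℓ' => ?_
      have : γ ℓ' ≠ γ ℓ0 := fun h => (Finset.mem_erase.mp hℓ').1 (hγ h)
      intro hcon
      exact this (by linear_combination hcon)
    rw [heval0] at hsum
    rcases mul_eq_zero.mp hsum.symm with h | h
    · exact h
    · exact absurd h hprodne
  -- now the Vandermonde part
  set q : F[X] := ∑ j : Fin ρ, (if (j : ℕ) < L then 0 else C (c j) * X ^ ((j : ℕ) - L))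
    with hq
  have hPq : P = q * D := by
    rw [hP, hq, Finset.sum_mul]
    refine Finset.sum_congr rfl fun j _ => ?_
    by_cases h : (j : ℕ) < L
    · simp [hQ, h, hcL j h]
    · simp [hQ, h]
  have hqzero : q = 0 := by
    rcases mul_eq_zero.mp (hPq ▸ hPzero) with h | h
    · exact h
    · exact absurd h hDne
  have hcH : ∀ (j : Fin ρ), ¬ (j : ℕ) < L → c j = 0 := by
    intro j0 h0
    have : q.coeff ((j0 : ℕ) - L) = 0 := by rw [hqzero]; simp
    rw [hq, Polynomial.finset_sum_coeff] at this
    rw [Finset.sum_eq_single j0] at this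
    · simpa [h0, coeff_C_mul, coeff_X_pow] using this
    · intro j _ hj
      by_cases h : (j : ℕ) < L
      · simp [h]
      · have hj2 := j0.2
        have : ¬ ((j0 : ℕ) - L = (j : ℕ) - L) := by
          intro hcon
          exact hj (Fin.ext (by omega))
        simp [h, coeff_C_mul, coeff_X_pow, this]
    · intro hj; exact absurd (Finset.mem_univ j0) hj
  apply hc0
  funext j
  by_cases h : (j : ℕ) < L
  · exact hcL j h
  · exact hcH j h
end
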